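/- Let k and n be positive integers and c : ω^n → k a coloring. Then there is a subset X ⊆ ω^n homeomorphic to ω^n (subspace topology) such that c is constant on X^(i) \ X^(i+1) for each i < n. -/

import Mathlib

open Set Ordinal
open scoped Cardinal

universe u

/-- Natural (Hessenberg) addition of ordinals, as in the older Mathlib (`Ordinal.nadd`). -/
noncomputable def Ordinal.nadd (a b : Ordinal.{u}) : Ordinal.{u} :=
  max (⨆ x : Iio a, Order.succ (Ordinal.nadd x.1 b)) (⨆ x : Iio b, Order.succ (Ordinal.nadd a x.1))
termination_by (a, b)
decreasing_by
  · exact Prod.Lex.left _ _ x.2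
  · exact Prod.Lex.right _ x.2

infixl:65 " ♯ " => Ordinal.nadd

noncomputable section

/-- Derived set (non-isolated points) of a set of ordinals, as a subspace. -/
def deriv' (s : Set Ordinal.{0}) : Set Ordinal.{0} := {x ∈ s | x ∈ closure (s \ {x})}

/-- Iterated Cantor–Bendixson derivative. -/
def iterDeriv (s : Set Ordinal.{0}) (o : Ordinal.{0}) : Set Ordinal.{0} :=
  Ordinal.limitRecOn o s (fun _ ih => deriv' ih) (fun o _ ih => ⋂ (p : Ordinal.{0}) (h : p < o), ih p h)

/-- `s` contains a homeomorphic copy of the ordinal `α` (with its order topology). -/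
def HomeoCopy (α : Ordinal.{0}) (s : Set Ordinal.{0}) : Prop :=
  ∃ t : Set Ordinal, t ⊆ s ∧ Nonempty ((Iio α : Set Ordinal.{0}) ≃ₜ t)

/-- Two ordinals are biembeddable: each is homeomorphic to a subspace of the other. -/
def Biembed (α β : Ordinal.{0}) : Prop := HomeoCopy α (Iio β) ∧ HomeoCopy β (Iio α)

/-- Two sets of ordinals are order-homeomorphic: there is an order-preserving homeomorphism. -/
def OrderHomeo (X Y : Set Ordinal.{0}) : Prop :=
  ∃ e : X ≃ₜ Y, ∀ a b : X, a ≤ b ↔ e a ≤ e b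

/-- An ordinal is order-reinforcing. -/
def OrderReinforcing (α : Ordinal.{0}) : Prop :=
  ∀ X : Set Ordinal, Nonempty ((Iio α : Set Ordinal.{0}) ≃ₜ X) → ∃ Y ⊆ X, OrderHomeo (Iio α) Y

/-- The Cantor–Bendixson rank of an ordinal: the least exponent in its Cantor normal form. -/
def CB (x : Ordinal.{0}) : Ordinal := if x = 0 then 0 else sSup {γ | (ω : Ordinal.{0}) ^ γ ∣ x}

/-- The natural (Hessenberg) sum of a finite family of ordinals. -/
def natSumFam {k : ℕ} (α : Fin k → Ordinal.{0}) : Ordinal := (List.ofFn α).foldr (· ♯ ·) 0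

/-- The Milner–Rado sum of a finite family of ordinals. -/
def mrSumFam {k : ℕ} (α : Fin k → Ordinal.{0}) : Ordinal :=
  sInf {δ | ∀ β : Fin k → Ordinal, (∀ i, β i < α i) → δ ≠ natSumFam β}

/-- The topological pigeonhole relation `β → (top α i)¹` for finitely many colours. -/
def TopPH {k : ℕ} (β : Ordinal.{0}) (α : Fin k → Ordinal.{0}) : Prop :=
  ∀ c : Ordinal → Fin k, ∃ i, HomeoCopy (α i) (Iio β ∩ c ⁻¹' {i})

/-- The topological pigeonhole relation with an arbitrary index type of colours. -/
def TopPHFam {ι : Type*} (β : Ordinal.{0}) (α : ι → Ordinal.{0}) : Prop :=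
  ∀ c : Ordinal → ι, ∃ i, HomeoCopy (α i) (Iio β ∩ c ⁻¹' {i})

/-- `ω̄[γ, m]`: `ω ^ γ * m + 1` if `γ > 0`, and `m` if `γ = 0`. -/
def obar (γ : Ordinal.{0}) (m : ℕ) : Ordinal := if γ = 0 then (m : Ordinal.{0}) else ω ^ γ * m + 1

/-- `C` is closed and unbounded in `o`. -/
def IsClubIn (C : Set Ordinal.{0}) (o : Ordinal.{0}) : Prop :=
  C ⊆ Iio o ∧ (∀ x < o, ∃ y ∈ C, x ≤ y) ∧
    ∀ x < o, x ≠ 0 → (∀ y < x, ∃ z ∈ C, y < z ∧ z < x) → x ∈ C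

/-- `S` is stationary in `o`: it meets every club subset of `o`. -/
def StationaryIn (S : Set Ordinal.{0}) (o : Ordinal.{0}) : Prop :=
  ∀ C, IsClubIn C o → (S ∩ C).Nonempty


/-!
Cantor–Bendixson derivatives commute with restriction to open sets and with topological
embeddings, and normal functions are embeddings. So it suffices to find a normal `f` fixing
`ω ^ n` such that `c ∘ f` depends only on the level of a point of `Iio (ω ^ n)`: then
`X = f '' Iio (ω ^ n)` works.

Such an `f` is built by induction on `n`. As `ω ^ (n + 1) = (ω ^ n + 1) * ω`, the space
`Iio (ω ^ (n + 1))` is a sequence of clopen blocks, translates of `Iic (ω ^ n)`, whose tops have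
level `n` and whose other points have the level they have in `Iio (ω ^ n)`. Homogenize every block
by induction; by the pigeonhole principle infinitely many blocks `g j` share their level colours
and the colour of their top, and sending the `j`-th block onto the `g j`-th one is normal.
-/

open Topology Order

theorem StrictMono.isEmbedding_of_continuous {α β : Type*} [LinearOrder α] [TopologicalSpace α]
    [OrderTopology α] [LinearOrder β] [TopologicalSpace β] [OrderTopology β] {f : α → β}
    (hf : StrictMono f) (hc : Continuous f) : IsEmbedding f :=
  ⟨⟨le_antisymm (continuous_iff_le_induced.1 hc)
    ((induced_topology_le_preorder hf.lt_iff_lt).trans_eq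
      OrderTopology.topology_eq_generate_intervals.symm)⟩, hf.injective⟩

theorem Order.IsNormal.isEmbedding {α β : Type*} [LinearOrder α] [WellFoundedLT α]
    [TopologicalSpace α] [OrderTopology α] [LinearOrder β] [WellFoundedLT β]
    [TopologicalSpace β] [OrderTopology β] {f : α → β} (hf : IsNormal f) : IsEmbedding f :=
  hf.strictMono.isEmbedding_of_continuous hf.continuous

theorem isOpen_Ico_of_not_isSuccLimit {β : Type*} [LinearOrder β] [TopologicalSpace β]
    [OrderTopology β] [SuccOrder β] [NoMaxOrder β] {a b : β} (ha : ¬ IsSuccLimit a) :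
    IsOpen (Ico a b) :=
  SuccOrder.isOpen_iff.2 fun _ ho hlim =>
    ⟨a, ho.1.lt_of_ne (by rintro rfl; exact ha hlim),
      fun _ hx => ⟨hx.1.le, hx.2.trans ho.2⟩⟩

namespace Ordinal

theorem mul_add_lt_mul_add_one {a r : Ordinal} (j : Ordinal) (hr : r < a) :
    a * j + r < a * (j + 1) := by
  rw [mul_add_one]
  exact add_lt_add_right hr _

theorem exists_eq_mul_natCast_add {a x : Ordinal} (ha : a ≠ 0) (hx : x < a * ω) :
    ∃ j : ℕ, ∃ r < a, x = a * j + r := by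
  obtain ⟨j, hj⟩ := lt_omega0.1 ((lt_mul_iff_div_lt ha).1 hx)
  exact ⟨j, x % a, mod_lt x ha, hj ▸ (div_add_mod x a).symm⟩

theorem not_isSuccLimit_add_one_mul_natCast (α : Ordinal) (j : ℕ) :
    ¬ IsSuccLimit ((α + 1) * j) := by
  cases j with
  | zero => simp
  | succ j =>
    rw [Nat.cast_succ, mul_add_one, ← add_assoc, ← Order.succ_eq_add_one]
    exact not_isSuccLimit_succ _

theorem isSuccLimit_of_isSuccLimit_add {a b : Ordinal} (ha : ¬ IsSuccLimit a)
    (h : IsSuccLimit (a + b)) : IsSuccLimit b := by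
  rcases zero_or_succ_or_isSuccLimit b with rfl | ⟨c, rfl⟩ | hb
  · exact absurd (by simpa using h) ha
  · rw [Order.succ_eq_add_one, ← add_assoc, ← Order.succ_eq_add_one] at h
    exact absurd h (not_isSuccLimit_succ _)
  · exact hb

theorem image_add_Iio (a b : Ordinal) : (a + ·) '' Iio b = Ico a (a + b) := by
  ext x
  constructor
  · rintro ⟨y, hy, rfl⟩
    exact ⟨le_self_add, add_lt_add_right hy _⟩
  · rintro ⟨h1, h2⟩
    refine ⟨x - a, ?_, Ordinal.add_sub_cancel_of_le h1⟩
    rwa [mem_Iio, ← add_lt_add_iff_left a, Ordinal.add_sub_cancel_of_le h1]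

end Ordinal

theorem deriv'_subset (s : Set Ordinal.{0}) : deriv' s ⊆ s := fun _ hx => hx.1

theorem deriv'_mono {s t : Set Ordinal.{0}} (h : s ⊆ t) : deriv' s ⊆ deriv' t :=
  fun _ hx => ⟨h hx.1, closure_mono (sdiff_subset_sdiff_left h) hx.2⟩

theorem deriv'_univ : deriv' univ = {x | IsSuccLimit x} := by
  ext x
  rw [deriv', mem_sep_iff, ← compl_eq_univ_sdiff, closure_compl, mem_compl_iff,
    mem_interior_iff_mem_nhds, ← Filter.le_pure_iff,
    LE.le.ge_iff_eq (α := Filter Ordinal) (pure_le_nhds x), eq_comm, SuccOrder.nhds_eq_pure,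
    not_not]
  simp

theorem zero_notMem_deriv' (s : Set Ordinal.{0}) : 0 ∉ deriv' s := fun h => by
  simpa [deriv'_univ] using deriv'_mono (subset_univ s) h

theorem deriv'_univ_eq_image : deriv' univ = (ω * ·) '' Ioi 0 := by
  ext x
  rw [deriv'_univ, mem_ofPred_eq, isSuccLimit_iff, isSuccPrelimit_iff_omega0_dvd]
  constructor
  · rintro ⟨hx, y, rfl⟩
    exact ⟨y, pos_iff_ne_zero.2 (by simpa using hx), rfl⟩
  · rintro ⟨y, hy, rfl⟩
    exact ⟨by simpa using hy.ne', dvd_mul_right _ _⟩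

theorem deriv'_inter_of_isOpen (s : Set Ordinal.{0}) {U : Set Ordinal.{0}} (hU : IsOpen U) :
    deriv' (s ∩ U) = deriv' s ∩ U := by
  ext x
  refine ⟨fun ⟨⟨hs, hxU⟩, hx⟩ =>
      ⟨⟨hs, closure_mono (sdiff_subset_sdiff_left inter_subset_left) hx⟩, hxU⟩,
    fun ⟨⟨hs, hx⟩, hxU⟩ => ⟨⟨hs, hxU⟩, ?_⟩⟩
  have := hU.inter_closure ⟨hxU, hx⟩
  rwa [← inter_sdiff_assoc, inter_comm] at this

theorem Topology.IsEmbedding.deriv'_image {f : Ordinal.{0} → Ordinal.{0}} (hf : IsEmbedding f)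
    (s : Set Ordinal.{0}) : deriv' (f '' s) = f '' deriv' s := by
  have key : ∀ x, x ∈ closure (s \ {x}) ↔ f x ∈ closure (f '' s \ {f x}) := fun x => by
    rw [hf.closure_eq_preimage_closure_image, image_sdiff hf.injective, image_singleton]; rfl
  ext y
  constructor
  · rintro ⟨⟨x, hx, rfl⟩, h⟩
    exact ⟨x, ⟨hx, (key x).2 h⟩, rfl⟩
  · rintro ⟨x, ⟨hx, h⟩, rfl⟩
    exact ⟨mem_image_of_mem f hx, (key x).1 h⟩

theorem iterate_deriv'_inter_of_isOpen (s : Set Ordinal.{0}) {U : Set Ordinal.{0}}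
    (hU : IsOpen U) (i : ℕ) : deriv'^[i] (s ∩ U) = deriv'^[i] s ∩ U :=
  (Function.Semiconj.iterate_right (f := (· ∩ U))
    (fun t => (deriv'_inter_of_isOpen t hU).symm) i s).symm

theorem Topology.IsEmbedding.iterate_deriv'_image {f : Ordinal.{0} → Ordinal.{0}}
    (hf : IsEmbedding f) (s : Set Ordinal.{0}) (i : ℕ) :
    deriv'^[i] (f '' s) = f '' deriv'^[i] s :=
  (Function.Semiconj.iterate_right (f := (f '' ·)) (fun t => (hf.deriv'_image t).symm) i s).symm

theorem iterate_deriv'_antitone (s : Set Ordinal.{0}) : Antitone (deriv'^[·] s) :=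
  antitone_nat_of_succ_le fun i => by
    rw [Function.iterate_succ_apply']
    exact deriv'_subset _

theorem iterDeriv_natCast (s : Set Ordinal.{0}) (i : ℕ) : iterDeriv s i = deriv'^[i] s := by
  induction i with
  | zero => rw [Nat.cast_zero, iterDeriv, Ordinal.limitRecOn_zero]; rfl
  | succ i ih =>
    rw [Nat.cast_succ, iterDeriv, Ordinal.limitRecOn_add_one, Function.iterate_succ_apply']
    exact congrArg deriv' ih

def cbLevel (s : Set Ordinal.{0}) (i : ℕ) : Set Ordinal.{0} := deriv'^[i] s \ deriv'^[i + 1] s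

theorem cbLevel_subset (s : Set Ordinal.{0}) (i : ℕ) : cbLevel s i ⊆ s :=
  fun _ hx => iterate_deriv'_antitone s (Nat.zero_le i) hx.1

theorem cbLevel_inter_of_isOpen (s : Set Ordinal.{0}) {U : Set Ordinal.{0}} (hU : IsOpen U)
    (i : ℕ) : cbLevel (s ∩ U) i = cbLevel s i ∩ U := by
  ext x
  simp only [cbLevel, iterate_deriv'_inter_of_isOpen s hU, mem_sdiff, mem_inter_iff]
  tauto

theorem Topology.IsEmbedding.cbLevel_image {f : Ordinal.{0} → Ordinal.{0}} (hf : IsEmbedding f)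
    (s : Set Ordinal.{0}) (i : ℕ) : cbLevel (f '' s) i = f '' cbLevel s i := by
  simp only [cbLevel, hf.iterate_deriv'_image, image_sdiff hf.injective]

theorem eq_of_mem_cbLevel {s : Set Ordinal.{0}} {x : Ordinal.{0}} {i j : ℕ}
    (hi : x ∈ cbLevel s i) (hj : x ∈ cbLevel s j) : i = j := by
  have key : ∀ {i j}, x ∈ cbLevel s i → x ∈ cbLevel s j → j ≤ i := fun hi hj =>
    not_lt.1 fun h => hi.2 (iterate_deriv'_antitone s h hj.1)
  exact le_antisymm (key hj hi) (key hi hj)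

theorem lt_of_mem_cbLevel {s : Set Ordinal.{0}} {x : Ordinal.{0}} {i N : ℕ}
    (hN : deriv'^[N] s = ∅) (hx : x ∈ cbLevel s i) : i < N :=
  not_le.1 fun h => by simpa [hN] using iterate_deriv'_antitone s h hx.1

theorem iterate_deriv'_univ (i : ℕ) :
    deriv'^[i + 1] univ = (ω ^ (↑(i + 1) : Ordinal.{0}) * ·) '' Ioi 0 := by
  induction i with
  | zero => simp [deriv'_univ_eq_image]
  | succ i ih =>
    have hpos : deriv' univ ⊆ Ioi 0 := fun x hx => by
      rw [deriv'_univ] at hx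
      exact hx.bot_lt
    have hIoi : deriv' (Ioi (0 : Ordinal.{0})) = deriv' univ := by
      rw [← univ_inter (Ioi 0), deriv'_inter_of_isOpen _ isOpen_Ioi, inter_eq_left.2 hpos]
    rw [Function.iterate_succ_apply', ih,
      (isNormal_mul_right (opow_pos _ omega0_pos)).isEmbedding.deriv'_image, hIoi,
      deriv'_univ_eq_image, image_image]
    simp only [← mul_assoc, ← opow_succ, Nat.cast_succ, Order.succ_eq_add_one]

theorem iterate_deriv'_Iio_opow (n : ℕ) :
    deriv'^[n + 1] (Iio (ω ^ (↑(n + 1) : Ordinal.{0}))) = ∅ := by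
  rw [← univ_inter (Iio _), iterate_deriv'_inter_of_isOpen _ isOpen_Iio, iterate_deriv'_univ]
  refine eq_empty_iff_forall_notMem.2 ?_
  rintro _ ⟨⟨y, hy, rfl⟩, hlt⟩
  exact (Ordinal.le_mul_left _ hy).not_gt hlt

theorem opow_mem_cbLevel (n : ℕ) :
    ω ^ (↑(n + 1) : Ordinal.{0}) ∈
      cbLevel (Iio (ω ^ (↑(n + 1) : Ordinal.{0}) + 1)) (n + 1) := by
  rw [← univ_inter (Iio _), cbLevel_inter_of_isOpen _ isOpen_Iio, cbLevel,
    iterate_deriv'_univ, iterate_deriv'_univ]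
  refine ⟨⟨⟨1, mem_Ioi.2 zero_lt_one, mul_one _⟩, ?_⟩, mem_Iio.2 (lt_add_one _)⟩
  rintro ⟨y, hy, h⟩
  have := (Ordinal.le_mul_left (ω ^ (↑(n + 1 + 1) : Ordinal.{0})) hy).trans_eq h
  exact this.not_gt ((opow_lt_opow_iff_right one_lt_omega0).2 (by norm_cast; omega))

theorem mul_natCast_add_mem_cbLevel_iff {α r : Ordinal.{0}} (j : ℕ) (hr : r < α + 1) (i : ℕ) :
    (α + 1) * j + r ∈ cbLevel (Iio ((α + 1) * ω)) i ↔ r ∈ cbLevel (Iio (α + 1)) i := by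
  have hA := (isNormal_add_right ((α + 1) * j)).isEmbedding
  have hsub : Ico ((α + 1) * j) ((α + 1) * j + (α + 1)) ⊆ Iio ((α + 1) * ω) := fun x hx =>
    hx.2.trans_le <| by
      rw [← mul_add_one, ← Nat.cast_succ]
      exact mul_le_mul_right (natCast_lt_omega0 _).le _
  have hblock : cbLevel (Iio ((α + 1) * ω)) i ∩ Ico ((α + 1) * j) ((α + 1) * j + (α + 1)) =
      ((α + 1) * j + ·) '' cbLevel (Iio (α + 1)) i := by
    rw [← cbLevel_inter_of_isOpen _ (isOpen_Ico_of_not_isSuccLimit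
      (not_isSuccLimit_add_one_mul_natCast α j)), inter_eq_right.2 hsub, ← image_add_Iio,
      hA.cbLevel_image]
  rw [← hA.injective.mem_set_image (s := cbLevel (Iio (α + 1)) i), ← hblock]
  exact ⟨fun h => ⟨h, le_self_add, add_lt_add_right hr _⟩, fun h => h.1⟩

def blockwise (α : Ordinal) (G : ℕ → Ordinal → Ordinal) (x : Ordinal) :
    Ordinal :=
  if x < (α + 1) * ω then G (x / (α + 1)).card.toNat (x % (α + 1)) else x

section Blockwise

variable {α : Ordinal} {G : ℕ → Ordinal → Ordinal}

theorem blockwise_of_le {x : Ordinal} (h : (α + 1) * ω ≤ x) : blockwise α G x = x :=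
  if_neg h.not_gt

theorem blockwise_apply (j : ℕ) {r : Ordinal} (hr : r < α + 1) :
    blockwise α G ((α + 1) * j + r) = G j r := by
  have hα : α + 1 ≠ 0 := (lt_add_one α).ne_bot
  have hlt : (α + 1) * j + r < (α + 1) * ω :=
    (mul_add_lt_mul_add_one _ hr).trans_le
      (mul_le_mul_right (by exact_mod_cast (natCast_lt_omega0 (j + 1)).le) _)
  rw [blockwise, if_pos hlt, mul_add_div _ hα, div_eq_zero_of_lt hr, add_zero, mul_add_mod_self,
    mod_eq_of_lt hr, card_nat, Cardinal.toNat_natCast]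

theorem strictMono_blockwise (hG : ∀ j, StrictMono (G j)) (hsep : ∀ j, G j α < G (j + 1) 0)
    (hbound : ∀ j, G j α < (α + 1) * ω) : StrictMono (blockwise α G) := by
  have hα : α + 1 ≠ 0 := (lt_add_one α).ne_bot
  have hle : ∀ j {r}, r < α + 1 → G j r ≤ G j α := fun j r hr =>
    (hG j).monotone (Order.lt_add_one_iff.1 hr)
  have hstart : StrictMono (G · 0) := strictMono_nat_of_lt_succ fun j =>
    (hle j (lt_add_one_iff.2 zero_le)).trans_lt (hsep j)
  have hblocks : ∀ {j j' : ℕ} {r r' : Ordinal}, j < j' → r < α + 1 → G j r < G j' r' :=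
    fun {j j' _ r'} hj hr =>
    calc G j _ ≤ G j α := hle j hr
      _ < G (j + 1) 0 := hsep j
      _ ≤ G j' 0 := hstart.monotone hj
      _ ≤ G j' r' := (hG j').monotone zero_le
  intro x y hxy
  by_cases hy : y < (α + 1) * ω
  · obtain ⟨j', r', hr', rfl⟩ := exists_eq_mul_natCast_add hα hy
    obtain ⟨j, r, hr, rfl⟩ := exists_eq_mul_natCast_add hα (hxy.trans hy)
    rw [blockwise_apply j hr, blockwise_apply j' hr']
    rcases lt_trichotomy j j' with hj | rfl | hj
    · exact hblocks hj hr
    · exact (hG j) ((add_lt_add_iff_left _).1 hxy)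
    · have hlt : (α + 1) * j' + r' < (α + 1) * j + r :=
        (mul_add_lt_mul_add_one _ hr').trans_le
          ((mul_le_mul_right (by exact_mod_cast hj) _).trans le_self_add)
      exact absurd hxy hlt.not_gt
  · rw [blockwise_of_le (not_lt.1 hy)]
    by_cases hx : x < (α + 1) * ω
    · obtain ⟨j, r, hr, rfl⟩ := exists_eq_mul_natCast_add hα hx
      rw [blockwise_apply j hr]
      exact ((hle j hr).trans_lt (hbound j)).trans_le (not_lt.1 hy)
    · rwa [blockwise_of_le (not_lt.1 hx)]

theorem isNormal_blockwise (hG : ∀ j, IsNormal (G j)) (hsep : ∀ j, G j α < G (j + 1) 0)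
    (hbound : ∀ j, G j α < (α + 1) * ω) : IsNormal (blockwise α G) := by
  have hmono := strictMono_blockwise (fun j => (hG j).strictMono) hsep hbound
  refine isNormal_iff.2 ⟨hmono, fun o ho a ha => ?_⟩
  by_cases hoL : o < (α + 1) * ω
  · obtain ⟨j, r, hr, rfl⟩ := exists_eq_mul_natCast_add (lt_add_one α).ne_bot hoL
    rw [blockwise_apply j hr, (hG j).le_iff_forall_le
      (isSuccLimit_of_isSuccLimit_add (not_isSuccLimit_add_one_mul_natCast α j) ho)]
    intro s hs
    simpa only [blockwise_apply j (hs.trans hr)] using ha _ (add_lt_add_right hs _)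
  · rw [blockwise_of_le (not_lt.1 hoL), ho.le_iff_forall_le]
    exact fun y hy => hmono.le_apply.trans (ha y hy)

end Blockwise

structure Homogenizes {κ : Type*} (c : Ordinal.{0} → κ) (α : Ordinal.{0})
    (f : Ordinal.{0} → Ordinal.{0}) : Prop where
  isNormal : IsNormal f
  map_self : f α = α
  exists_const_on_cbLevel : ∃ d : ℕ → κ, ∀ i, ∀ x ∈ cbLevel (Iio α) i, c (f x) = d i

theorem Homogenizes.image_Iio_subset {κ : Type*} {c : Ordinal.{0} → κ} {α : Ordinal.{0}}
    {f : Ordinal.{0} → Ordinal.{0}} (hf : Homogenizes c α f) : f '' Iio α ⊆ Iio α := by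
  rintro _ ⟨x, hx, rfl⟩
  exact hf.map_self ▸ hf.isNormal.strictMono hx

theorem homogenizes_id_of_le_one {κ : Type*} (c : Ordinal.{0} → κ) {α : Ordinal.{0}}
    (hα : α ≤ 1) : Homogenizes c α id where
  isNormal := IsNormal.id
  map_self := rfl
  exists_const_on_cbLevel := ⟨fun _ => c 0, fun i x hx => by
    rw [Order.lt_one_iff.1 ((cbLevel_subset _ i hx).trans_le hα), id]⟩

theorem exists_strictMono_const {κ : Type*} [Finite κ] (key : ℕ → κ) :
    ∃ v, ∃ g : ℕ → ℕ, StrictMono g ∧ ∀ j, key (g j) = v := by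
  obtain ⟨v, hv⟩ := Finite.exists_infinite_fiber key
  have hinf : (key ⁻¹' {v}).Infinite := infinite_coe_iff.1 hv
  exact ⟨v, Nat.nth (key · = v), Nat.nth_strictMono hinf, Nat.nth_mem_of_infinite hinf⟩

theorem exists_homogenizes_add_one_mul_omega0 {κ : Type*} [Finite κ] {α : Ordinal.{0}}
    {N : ℕ} (hE : deriv'^[N] (Iio α) = ∅) (hT : α ∈ cbLevel (Iio (α + 1)) N)
    (h : ∀ c : Ordinal.{0} → κ, ∃ f, Homogenizes c α f) (c : Ordinal.{0} → κ) :
    ∃ F, Homogenizes c ((α + 1) * ω) F := by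
  choose f hf using fun m : ℕ => h fun y => c ((α + 1) * m + y)
  choose d hd using fun m => (hf m).exists_const_on_cbLevel
  obtain ⟨v, g, hg, hgv⟩ :=
    exists_strictMono_const fun m => ((fun i : Fin N => d m i), c ((α + 1) * m + α))
  have htop : ∀ j, (α + 1) * g j + f (g j) α < (α + 1) * (g j + 1) := fun j => by
    rw [(hf (g j)).map_self]
    exact mul_add_lt_mul_add_one _ (lt_add_one α)
  refine ⟨blockwise α fun j r => (α + 1) * g j + f (g j) r,
    isNormal_blockwise (fun j => (isNormal_add_right _).comp (hf (g j)).isNormal)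
      (fun j => (htop j).trans_le ((mul_le_mul_right ?_ _).trans le_self_add))
      (fun j => (htop j).trans_le (mul_le_mul_right ?_ _)),
    blockwise_of_le le_rfl, fun i => if hi : i < N then v.1 ⟨i, hi⟩ else v.2, ?_⟩
  · exact_mod_cast hg (Nat.lt_succ_self j)
  · exact_mod_cast (natCast_lt_omega0 (g j + 1)).le
  intro i x hx
  obtain ⟨j, r, hr, rfl⟩ :=
    exists_eq_mul_natCast_add (lt_add_one α).ne_bot (cbLevel_subset _ i hx)
  rw [mul_natCast_add_mem_cbLevel_iff j hr] at hx
  rw [blockwise_apply j hr]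
  dsimp only
  rcases (lt_add_one_iff.1 hr).lt_or_eq with hrα | rfl
  · have hx' : r ∈ cbLevel (Iio α) i := by
      rw [← inter_eq_right.2 (Iio_subset_Iio (lt_add_one α).le),
        cbLevel_inter_of_isOpen _ isOpen_Iio]
      exact ⟨hx, hrα⟩
    have hiN := lt_of_mem_cbLevel hE hx'
    rw [dif_pos hiN]
    exact (hd (g j) i r hx').trans (congrFun (congrArg Prod.fst (hgv j)) ⟨i, hiN⟩)
  · rw [eq_of_mem_cbLevel hx hT, dif_neg (lt_irrefl N), (hf (g j)).map_self]
    exact congrArg Prod.snd (hgv j)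

theorem exists_homogenizes_opow_succ {κ : Type*} [Finite κ] (n : ℕ) :
    ∀ c : Ordinal.{0} → κ, ∃ f, Homogenizes c (ω ^ (↑(n + 1) : Ordinal.{0})) f := by
  induction n with
  | zero =>
    intro c
    -- `ω = (0 + 1) * ω` is a sequence of one-point blocks
    simpa using exists_homogenizes_add_one_mul_omega0 (N := 0) (by simp)
      ⟨by simp, zero_notMem_deriv' _⟩ (fun c => ⟨id, homogenizes_id_of_le_one c zero_le⟩) c
  | succ n ih =>
    intro c
    have hsucc :
        (ω ^ (↑(n + 1) : Ordinal.{0}) + 1) * ω = ω ^ (↑(n + 1 + 1) : Ordinal.{0}) := by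
      rw [add_mul_of_isSuccLimit (one_add_of_omega0_le (left_le_opow _ (by simp)))
        isSuccLimit_omega0, Nat.cast_succ (n + 1), opow_add_one]
    rw [← hsucc]
    exact exists_homogenizes_add_one_mul_omega0 (iterate_deriv'_Iio_opow n)
      (opow_mem_cbLevel n) ih c

theorem exists_homogenizes_opow {κ : Type*} [Finite κ] (n : ℕ) (c : Ordinal.{0} → κ) :
    ∃ f, Homogenizes c (ω ^ (n : Ordinal.{0})) f := by
  cases n with
  | zero => exact ⟨id, homogenizes_id_of_le_one c (by simp)⟩
  | succ n => exact exists_homogenizes_opow_succ n c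

theorem colouring_constant_on_ranks_general (k n : ℕ)
    (c : Ordinal.{0} → Fin k) :
    ∃ X : Set Ordinal.{0}, X ⊆ Iio (ω ^ (n : Ordinal.{0})) ∧
      Nonempty ((Iio (ω ^ (n : Ordinal.{0})) : Set Ordinal.{0}) ≃ₜ X) ∧
      ∀ i : ℕ, i < n →
        ∀ x ∈ iterDeriv X (i : Ordinal.{0}) \ iterDeriv X ((i : Ordinal.{0}) + 1),
          ∀ y ∈ iterDeriv X (i : Ordinal.{0}) \ iterDeriv X ((i : Ordinal.{0}) + 1),
            c x = c y := by
  obtain ⟨f, hf⟩ := exists_homogenizes_opow n c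
  obtain ⟨d, hd⟩ := hf.exists_const_on_cbLevel
  have hemb := hf.isNormal.isEmbedding
  refine ⟨f '' Iio _, hf.image_Iio_subset, ⟨hemb.homeomorphImage _⟩,
    fun i _ x hx y hy => ?_⟩
  rw [← Nat.cast_succ, iterDeriv_natCast, iterDeriv_natCast] at hx hy
  obtain ⟨x', hx', rfl⟩ := (hemb.cbLevel_image _ i).subset hx
  obtain ⟨y', hy', rfl⟩ := (hemb.cbLevel_image _ i).subset hy
  rw [hd i x' hx', hd i y' hy']

/-- Any finite colouring of `ω^n` is constant on rank classes of a homeomorphic copy of `ω^n`. -/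
theorem colouring_constant_on_ranks (k n : ℕ) (hk : 0 < k) (hn : 0 < n)
    (c : Ordinal.{0} → Fin k) :
    ∃ X : Set Ordinal.{0}, X ⊆ Iio (ω ^ (n : Ordinal.{0})) ∧
      Nonempty ((Iio (ω ^ (n : Ordinal.{0})) : Set Ordinal.{0}) ≃ₜ X) ∧
      ∀ i : ℕ, i < n →
        ∀ x ∈ iterDeriv X (i : Ordinal.{0}) \ iterDeriv X ((i : Ordinal.{0}) + 1),
          ∀ y ∈ iterDeriv X (i : Ordinal.{0}) \ iterDeriv X ((i : Ordinal.{0}) + 1),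
            c x = c y :=
  colouring_constant_on_ranks_general k n c
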